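/- arXiv:2101.04606 — 2 statements merged into one kernel-verified Lean document; each statement's English description precedes it below -/
import Mathlib

section
/- Let $d \geq 2$, $s \in \{\pm1\}^d$, and let $\alpha(s_1e_1),\dots,\alpha(s_de_d)$ be strictly positive reals. Define $\psi : \mathbb{R}^{d-1} \to \mathbb{R}$ by $\psi(\theta) = \sum_{i=1}^{d-1} \alpha(s_i e_i) e^{\theta_i} + \alpha(s_d e_d) e^{-(\theta_1 + \cdots + \theta_{d-1})}$. Then for any $x = \sum_{i=1}^d \delta_i s_i e_i$ with $\delta_i > 0$ for all $i$ and $\sum_{i=1}^d \delta_i = 1$, the choice $\theta_i(x) = \log\big(\frac{\delta_i C}{\alpha(s_ie_i)}\big)$ for $i=1,\dots,d-1$, where $C = \big(\prod_{i=1}^d \frac{\alpha(s_ie_i)}{\delta_i}\big)^{1/d}$, satisfies $\frac{\partial}{\partial \theta_i} \log\psi(\theta(x)) = \delta_i - \delta_d$ for each $i = 1,\dots,d-1$. -/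
/-!
Write `ψ θ = ∑ₖ αₖ exp ⟨θ, vₖ⟩` over the projected jumps `vₖ` (`eₖ` for `k < d`, and
`-(1, …, 1)` for `k = d`). Then `∇ log ψ (θ)` is the mean of the `vₖ` under the tilted weights
`αₖ exp ⟨θ, vₖ⟩ / ψ θ`. The choice of `C` makes `∏ₖ δₖ C / αₖ = 1`, which is exactly what turns
every tilted weight at `θ(x)`, including the last one, into `δₖ C`; so the tilted law is `δ`
and its mean has `i`-th coordinate `δᵢ - δ_d`.
-/

open Finset

theorem fderiv_log_sum_mul_exp_apply {E ι : Type*} [NormedAddCommGroup E] [NormedSpace ℝ E]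
    [Fintype ι] (a : ι → ℝ) (ℓ : ι → StrongDual ℝ E) (x v : E)
    (hx : ∑ k, a k * Real.exp (ℓ k x) ≠ 0) :
    fderiv ℝ (fun y => Real.log (∑ k, a k * Real.exp (ℓ k y))) x v =
      (∑ k, a k * Real.exp (ℓ k x) * ℓ k v) / ∑ k, a k * Real.exp (ℓ k x) := by
  have hsum : HasFDerivAt (fun y => ∑ k, a k * Real.exp (ℓ k y))
      (∑ k, a k • Real.exp (ℓ k x) • ℓ k) x :=
    HasFDerivAt.fun_sum fun k _ => ((ℓ k).hasFDerivAt.exp).const_smul (a k)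
  rw [(hsum.log hx).fderiv]
  simp only [smul_apply, _root_.sum_apply, smul_eq_mul]
  rw [inv_mul_eq_div]
  simp only [mul_assoc]

/-- The projected jump `vₖ` of the walk on the face, seen as the functional `θ ↦ ⟨θ, vₖ⟩`. -/
noncomputable def faceJump (m : ℕ) : Fin (m + 1) → StrongDual ℝ (Fin m → ℝ) :=
  Fin.lastCases (-∑ j, ContinuousLinearMap.proj j) ContinuousLinearMap.proj

@[simp]
theorem faceJump_castSucc {m : ℕ} (i : Fin m) (θ : Fin m → ℝ) :
    faceJump m i.castSucc θ = θ i := by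
  simp [faceJump]

@[simp]
theorem faceJump_last {m : ℕ} (θ : Fin m → ℝ) : faceJump m (Fin.last m) θ = -∑ j, θ j := by
  simp [faceJump]

theorem sum_mul_exp_faceJump {m : ℕ} (α : Fin (m + 1) → ℝ) (θ : Fin m → ℝ) :
    ∑ k, α k * Real.exp (faceJump m k θ) =
      ∑ i : Fin m, α i.castSucc * Real.exp (θ i) + α (Fin.last m) * Real.exp (-∑ i, θ i) := by
  simp [Fin.sum_univ_castSucc]

theorem sum_mul_faceJump_single {m : ℕ} (δ : Fin (m + 1) → ℝ) (i : Fin m) :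
    ∑ k, δ k * faceJump m k (Pi.single i 1) = δ i.castSucc - δ (Fin.last m) := by
  simp [Fin.sum_univ_castSucc, Pi.single_apply, sub_eq_add_neg]

theorem rpow_one_div_natCast_succ_pow {x : ℝ} (hx : 0 ≤ x) (m : ℕ) :
    (x ^ ((1 : ℝ) / (m + 1))) ^ (m + 1) = x := by
  have h := Real.rpow_inv_natCast_pow hx m.succ_ne_zero
  rwa [Nat.cast_succ, ← one_div] at h

theorem prod_mul_div_eq_one {ι : Type*} [Fintype ι] {α δ : ι → ℝ}
    (hα : ∀ i, 0 < α i) (hδ : ∀ i, 0 < δ i) {C : ℝ}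
    (hC : C ^ Fintype.card ι = ∏ i, α i / δ i) :
    ∏ i, δ i * C / α i = 1 := by
  have hαδ : ∀ i, δ i / α i * (α i / δ i) = 1 := fun i => by
    field_simp [(hα i).ne', (hδ i).ne']
  calc ∏ i, δ i * C / α i = (∏ i, δ i / α i) * C ^ Fintype.card ι := by
        rw [← card_univ, ← prod_const, ← prod_mul_distrib]
        exact prod_congr rfl fun i _ => by ring
    _ = 1 := by rw [hC, ← prod_mul_distrib, prod_eq_one fun i _ => hαδ i]

theorem mul_exp_faceJump_eq {m : ℕ} {α δ : Fin (m + 1) → ℝ}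
    (hα : ∀ i, 0 < α i) (hδ : ∀ i, 0 < δ i) {C : ℝ} (hC : 0 < C)
    (hprod : ∏ k, δ k * C / α k = 1) (k : Fin (m + 1)) :
    α k * Real.exp (faceJump m k fun i => Real.log (δ i.castSucc * C / α i.castSucc)) =
      δ k * C := by
  have hpos : ∀ k, 0 < δ k * C / α k := fun k => div_pos (mul_pos (hδ k) hC) (hα k)
  induction k using Fin.lastCases with
  | cast i =>
    rw [faceJump_castSucc, Real.exp_log (hpos _)]
    field_simp [(hα i.castSucc).ne']
  | last =>
    rw [Fin.prod_univ_castSucc] at hprod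
    rw [faceJump_last, Real.exp_neg, Real.exp_sum,
      prod_congr rfl fun i _ => Real.exp_log (hpos i.castSucc)]
    have hlast := eq_inv_of_mul_eq_one_right hprod
    rw [div_eq_iff (hα _).ne'] at hlast
    rw [hlast, mul_comm]

theorem stmt7_general (m : ℕ) (α δ : Fin (m+1) → ℝ)
    (hα : ∀ i, 0 < α i) (hδ : ∀ i, 0 < δ i) (hsum : ∑ i, δ i = 1) :
    let ψ : (Fin m → ℝ) → ℝ := fun θ =>
      ∑ i : Fin m, α i.castSucc * Real.exp (θ i) +
        α (Fin.last m) * Real.exp (-∑ i, θ i)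
    let C : ℝ := (∏ i, α i / δ i) ^ ((1 : ℝ) / (m + 1))
    let θx : Fin m → ℝ := fun i => Real.log (δ i.castSucc * C / α i.castSucc)
    ∀ i : Fin m, fderiv ℝ (fun θ => Real.log (ψ θ)) θx (Pi.single i 1) =
      δ i.castSucc - δ (Fin.last m) := by
  intro ψ C θx i
  have hX : 0 < ∏ k, α k / δ k := prod_pos fun k _ => div_pos (hα k) (hδ k)
  have hC : 0 < C := Real.rpow_pos_of_pos hX _
  have hprod : ∏ k, δ k * C / α k = 1 := prod_mul_div_eq_one hα hδ (by
    rw [Fintype.card_fin]; exact rpow_one_div_natCast_succ_pow hX.le m)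
  have hweight : ∀ k, α k * Real.exp (faceJump m k θx) = δ k * C :=
    mul_exp_faceJump_eq hα hδ hC hprod
  have hψ : ψ = fun θ => ∑ k, α k * Real.exp (faceJump m k θ) :=
    funext fun θ => (sum_mul_exp_faceJump α θ).symm
  have hmass : ∑ k, α k * Real.exp (faceJump m k θx) = C := by
    simp only [hweight, ← sum_mul, hsum, one_mul]
  rw [hψ, fderiv_log_sum_mul_exp_apply _ _ _ _ (hmass ▸ hC.ne'), hmass]
  simp only [hweight, mul_right_comm _ C, ← sum_mul, sum_mul_faceJump_single]
  field_simp

/-- Explicit solvability of the gradient equation `∇ log ψ (θ(x)) = π(x)`: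
with `θ_i(x) = log(δ_i C / α_i)` and `C = (∏ α_i/δ_i)^{1/d}`, each partial derivative
of `log ψ` at `θ(x)` equals `δ_i - δ_d`.  Here `d = m + 1`. -/
theorem stmt7 (m : ℕ) (hm : 1 ≤ m) (α δ : Fin (m+1) → ℝ)
    (hα : ∀ i, 0 < α i) (hδ : ∀ i, 0 < δ i) (hsum : ∑ i, δ i = 1) :
    let ψ : (Fin m → ℝ) → ℝ := fun θ =>
      ∑ i : Fin m, α i.castSucc * Real.exp (θ i) +
        α (Fin.last m) * Real.exp (-∑ i, θ i)
    let C : ℝ := (∏ i, α i / δ i) ^ ((1 : ℝ) / (m + 1))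
    let θx : Fin m → ℝ := fun i => Real.log (δ i.castSucc * C / α i.castSucc)
    ∀ i : Fin m, fderiv ℝ (fun θ => Real.log (ψ θ)) θx (Pi.single i 1) =
      δ i.castSucc - δ (Fin.last m) :=
  stmt7_general m α δ hα hδ hsum
end

section
/- Let $d \geq 2$ and let $\alpha(e) > 0$ for each of the $2d$ signed unit vectors $e \in \{\pm e_1,\dots,\pm e_d\}$, with $\sum_e \alpha(e) = 1$. Define $\lambda(\theta) = \sum_e \alpha(e) e^{\langle\theta,e\rangle}$ for $\theta \in \mathbb{R}^d$. Then for every $x \in \mathbb{R}^d$ with $|x|_1 = 1$, $\sup_{\theta\in\mathbb{R}^d}\big(\langle\theta,x\rangle - \log\lambda(\theta)\big) = \sum_{i=1}^d |x_i| \log\frac{|x_i|}{\alpha(\frac{x_i}{|x_i|}e_i)}$, with the convention $0\log 0 = 0$ whenever $x_i = 0$. -/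
/-!
The upper bound is the Gibbs variational inequality: keeping from `λ(θ)` only the term of the
direction `sign(xᵢ) eᵢ` in each coordinate, `⟨θ,x⟩ - log λ(θ)` is at most the relative entropy
of `|x|` with respect to those weights. It is attained asymptotically by
`θᵢ = sign(xᵢ) (t + log (|xᵢ| / α(sign(xᵢ) eᵢ)))` (and `θᵢ = 0` when `xᵢ = 0`), for which
`λ(θ) ≤ eᵗ + C` for a constant `C`, so the gap is at most `C e⁻ᵗ`.
-/

open Finset Real

theorem sum_mul_sub_log_div_le_log_sum_mul_exp {ι : Type*} (s : Finset ι) {w α a : ι → ℝ}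
    (hw : ∀ i ∈ s, 0 ≤ w i) (hw1 : ∑ i ∈ s, w i = 1) (hα : ∀ i ∈ s, 0 < α i) :
    ∑ i ∈ s, w i * (a i - log (w i / α i)) ≤ log (∑ i ∈ s, α i * exp (a i)) := by
  set S := ∑ i ∈ s, α i * exp (a i)
  have hS : 0 < S := sum_pos (fun i hi => mul_pos (hα i hi) (exp_pos _))
    (nonempty_of_sum_ne_zero (by rw [hw1]; exact one_ne_zero))
  -- termwise `log y ≤ y - 1` with `y = α i * exp (a i) / (w i * S)`
  have hterm : ∀ i ∈ s,
      w i * (a i - log (w i / α i)) - w i * log S ≤ α i * exp (a i) / S - w i := by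
    intro i hi
    have hαi := hα i hi
    rcases (hw i hi).eq_or_lt with h0 | hpos
    · rw [← h0]; simp only [zero_mul, sub_zero]; positivity
    · have hlog : a i - log (w i / α i) - log S = log (α i * exp (a i) / (w i * S)) := by
        rw [log_div hpos.ne' hαi.ne', log_div (by positivity) (by positivity),
          log_mul hαi.ne' (exp_pos _).ne', log_mul hpos.ne' hS.ne', log_exp]
        ring
      calc w i * (a i - log (w i / α i)) - w i * log S
          = w i * log (α i * exp (a i) / (w i * S)) := by rw [← hlog]; ring
        _ ≤ w i * (α i * exp (a i) / (w i * S) - 1) :=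
          mul_le_mul_of_nonneg_left (log_le_sub_one_of_pos (by positivity)) hpos.le
        _ = α i * exp (a i) / S - w i := by field_simp
  have hsum := sum_le_sum hterm
  rw [sum_sub_distrib, sum_sub_distrib, ← sum_mul, ← sum_div, hw1, div_self hS.ne'] at hsum
  linarith

theorem log_exp_add_le (t : ℝ) {C : ℝ} (hC : 0 ≤ C) : log (exp t + C) ≤ t + C * exp (-t) := by
  rw [log_le_iff_le_exp (by positivity), exp_add]
  calc exp t + C = exp t * (C * exp (-t) + 1) := by rw [exp_neg]; field_simp; ring
    _ ≤ exp t * exp (C * exp (-t)) := by gcongr; exact add_one_le_exp _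

theorem mul_eq_abs_mul_ite (θ x : ℝ) : θ * x = |x| * (if 0 ≤ x then θ else -θ) := by
  split_ifs with h
  · rw [abs_of_nonneg h]; ring
  · rw [abs_of_neg (not_le.mp h)]; ring

theorem ite_mul_exp_ite_le {p m : ℝ} (hp : 0 < p) (hm : 0 < m) (θ x : ℝ) :
    (if 0 ≤ x then p else m) * exp (if 0 ≤ x then θ else -θ) ≤ p * exp θ + m * exp (-θ) := by
  split_ifs
  · nlinarith [exp_pos (-θ)]
  · nlinarith [exp_pos θ]

noncomputable def tiltCoord (p m x t : ℝ) : ℝ :=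
  if x = 0 then 0 else if 0 ≤ x then t + log (|x| / p) else -(t + log (|x| / m))

theorem tiltCoord_mul (p m x t : ℝ) :
    tiltCoord p m x t * x = |x| * t + |x| * log (|x| / (if 0 ≤ x then p else m)) := by
  unfold tiltCoord
  rcases lt_trichotomy x 0 with h | rfl | h
  · rw [if_neg h.ne, if_neg (not_le.mpr h), if_neg (not_le.mpr h), abs_of_neg h]; ring
  · simp
  · rw [if_neg h.ne', if_pos h.le, if_pos h.le, abs_of_pos h]; ring

theorem mul_exp_tiltCoord_add_mul_exp_neg_le {p m : ℝ} (hp : 0 < p) (hm : 0 < m) (x : ℝ)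
    {t : ℝ} (ht : 0 ≤ t) :
    p * exp (tiltCoord p m x t) + m * exp (-tiltCoord p m x t) ≤
      |x| * exp t + (if x = 0 then p + m else p * m / |x|) := by
  unfold tiltCoord
  rcases eq_or_ne x 0 with rfl | hx
  · simp
  have hxa : 0 < |x| := abs_pos.mpr hx
  have hdecay : p * m / |x| * exp (-t) ≤ p * m / |x| :=
    mul_le_of_le_one_right (by positivity) (exp_le_one_iff.mpr (by linarith))
  rw [if_neg hx, if_neg hx]
  split_ifs
  · rw [neg_add, exp_add, exp_add, exp_neg (log _), exp_log (by positivity)]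
    have : p * (exp t * (|x| / p)) + m * (exp (-t) * (|x| / p)⁻¹) =
        |x| * exp t + p * m / |x| * exp (-t) := by field_simp
    linarith
  · rw [neg_neg, neg_add, exp_add, exp_add, exp_neg (log _), exp_log (by positivity)]
    have : p * (exp (-t) * (|x| / m)⁻¹) + m * (exp t * (|x| / m)) =
        |x| * exp t + p * m / |x| * exp (-t) := by field_simp; ring
    linarith

section

variable {ι : Type*} [Fintype ι] {αp αm : ι → ℝ} {x : ι → ℝ}

noncomputable def mgf (αp αm θ : ι → ℝ) : ℝ :=
  ∑ i, (αp i * exp (θ i) + αm i * exp (-θ i))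

theorem mgf_pos [Nonempty ι] (hp : ∀ i, 0 < αp i) (hm : ∀ i, 0 < αm i) (θ : ι → ℝ) :
    0 < mgf αp αm θ :=
  sum_pos (fun i _ => by have := hp i; have := hm i; positivity) univ_nonempty

theorem sum_mul_sub_log_mgf_le (hp : ∀ i, 0 < αp i) (hm : ∀ i, 0 < αm i)
    (hx : ∑ i, |x i| = 1) (θ : ι → ℝ) :
    ∑ i, θ i * x i - log (mgf αp αm θ) ≤
      ∑ i, |x i| * log (|x i| / (if 0 ≤ x i then αp i else αm i)) := by
  set α : ι → ℝ := fun i => if 0 ≤ x i then αp i else αm i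
  set a : ι → ℝ := fun i => if 0 ≤ x i then θ i else -θ i
  have hα : ∀ i, 0 < α i := fun i => by dsimp only [α]; split_ifs; exacts [hp i, hm i]
  have hgibbs := sum_mul_sub_log_div_le_log_sum_mul_exp univ (w := fun i => |x i|) (a := a)
    (fun i _ => abs_nonneg _) hx (fun i _ => hα i)
  have hmono : log (∑ i, α i * exp (a i)) ≤ log (mgf αp αm θ) :=
    log_le_log (sum_pos (fun i _ => mul_pos (hα i) (exp_pos _))
      (nonempty_of_sum_ne_zero (by rw [hx]; exact one_ne_zero)))
      (sum_le_sum fun i _ => ite_mul_exp_ite_le (hp i) (hm i) (θ i) (x i))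
  have hinner : ∑ i, θ i * x i = ∑ i, |x i| * (a i - log (|x i| / α i)) +
      ∑ i, |x i| * log (|x i| / α i) := by
    rw [← sum_add_distrib]
    exact sum_congr rfl fun i _ => by rw [mul_eq_abs_mul_ite]; ring
  linarith

theorem sub_mul_exp_neg_le_sum_mul_sub_log_mgf_tilt (hp : ∀ i, 0 < αp i)
    (hm : ∀ i, 0 < αm i) (hx : ∑ i, |x i| = 1) {t : ℝ} (ht : 0 ≤ t) :
    ∑ i, |x i| * log (|x i| / (if 0 ≤ x i then αp i else αm i)) -
        (∑ i, if x i = 0 then αp i + αm i else αp i * αm i / |x i|) * exp (-t) ≤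
      ∑ i, tiltCoord (αp i) (αm i) (x i) t * x i -
        log (mgf αp αm fun i => tiltCoord (αp i) (αm i) (x i) t) := by
  have : Nonempty ι := (univ_nonempty_iff.mp
    (nonempty_of_sum_ne_zero (by rw [hx]; exact one_ne_zero)))
  set C := ∑ i, if x i = 0 then αp i + αm i else αp i * αm i / |x i|
  have hC : 0 ≤ C := sum_nonneg fun i _ => by
    have := hp i; have := hm i
    split_ifs <;> positivity
  have hinner : ∑ i, tiltCoord (αp i) (αm i) (x i) t * x i =
      t + ∑ i, |x i| * log (|x i| / (if 0 ≤ x i then αp i else αm i)) := by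
    simp_rw [tiltCoord_mul]
    rw [sum_add_distrib, ← sum_mul, hx, one_mul]
  have hmgf : mgf αp αm (fun i => tiltCoord (αp i) (αm i) (x i) t) ≤ exp t + C := by
    refine (sum_le_sum fun i _ =>
      mul_exp_tiltCoord_add_mul_exp_neg_le (hp i) (hm i) (x i) ht).trans_eq ?_
    rw [sum_add_distrib, ← sum_mul, hx, one_mul]
  have hlog := (log_le_log (mgf_pos hp hm _) hmgf).trans (log_exp_add_le t hC)
  linarith

end

theorem stmt17_general (d : ℕ) (αp αm : Fin d → ℝ)
    (hp : ∀ i, 0 < αp i) (hm : ∀ i, 0 < αm i)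
    (x : Fin d → ℝ) (hx : ∑ i, |x i| = 1) :
    (⨆ θ : Fin d → ℝ, (∑ i, θ i * x i -
        Real.log (∑ i, (αp i * Real.exp (θ i) + αm i * Real.exp (-θ i))))) =
      ∑ i, |x i| * Real.log (|x i| / (if 0 ≤ x i then αp i else αm i)) := by
  have hub := sum_mul_sub_log_mgf_le hp hm hx
  have hbdd : BddAbove (Set.range fun θ => ∑ i, θ i * x i - log (mgf αp αm θ)) :=
    ⟨_, Set.forall_mem_range.mpr hub⟩
  refine le_antisymm (ciSup_le hub) (le_of_tendsto ?_ <| (Filter.eventually_ge_atTop 0).mono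
    fun t ht => (sub_mul_exp_neg_le_sum_mul_sub_log_mgf_tilt hp hm hx ht).trans
      (le_ciSup hbdd _))
  simpa using tendsto_const_nhds.sub (tendsto_exp_neg_atTop_nhds_zero.const_mul _)

/-- Evaluation of the Fenchel–Legendre transform of `log λ` at boundary points of the
unit `ℓ¹`-ball: for `|x|₁ = 1`,
`sup_θ (⟨θ,x⟩ - log λ(θ)) = ∑ᵢ |xᵢ| log(|xᵢ|/α(sign(xᵢ) eᵢ))` (with `0 log 0 = 0`).
The weight of `+eᵢ` is `αp i`, that of `-eᵢ` is `αm i`. -/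
theorem stmt17 (d : ℕ) (hd : 2 ≤ d) (αp αm : Fin d → ℝ)
    (hp : ∀ i, 0 < αp i) (hm : ∀ i, 0 < αm i)
    (hsum : ∑ i, (αp i + αm i) = 1)
    (x : Fin d → ℝ) (hx : ∑ i, |x i| = 1) :
    (⨆ θ : Fin d → ℝ, (∑ i, θ i * x i -
        Real.log (∑ i, (αp i * Real.exp (θ i) + αm i * Real.exp (-θ i))))) =
      ∑ i, |x i| * Real.log (|x i| / (if 0 ≤ x i then αp i else αm i)) :=
  stmt17_general d αp αm hp hm x hx
end
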